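/- arXiv:2207.10772 — 4 statements merged into one kernel-verified Lean document; each statement's English description precedes it below -/
import Mathlib

section
/- If f is strictly convex and all densities and conditional densities are positive, then D_f(P_XY || Q_XY) = D_f(P_X || Q_X) holds if and only if the conditional densities agree: p_{Y|X}(y|x) = q_{Y|X}(y|x) almost everywhere. -/
open MeasureTheory

/-- Supporting line for a strictly convex function on `Ioi 0`. -/
private lemma exists_tangent_line {f : ℝ → ℝ} (hconv : StrictConvexOn ℝ (Set.Ioi 0) f)
    {a : ℝ} (ha : 0 < a) :
    ∃ c : ℝ, (∀ t, 0 < t → f a + c * (t - a) ≤ f t) ∧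
      (∀ t, 0 < t → f a + c * (t - a) = f t → t = a) := by
  have haS : a ∈ Set.Ioi (0:ℝ) := Set.mem_Ioi.mpr ha
  set g : ℝ → ℝ := fun t => (f t - f a) / (t - a) with hg
  set S : Set ℝ := g '' Set.Ioi a with hS
  have hSne : S.Nonempty := ⟨g (a + 1), ⟨a + 1, Set.mem_Ioi.mpr (by linarith), rfl⟩⟩
  have hbdd : BddBelow S := by
    refine ⟨g (a / 2), ?_⟩
    rintro x ⟨s, hs, rfl⟩
    rw [Set.mem_Ioi] at hs
    exact (hconv.secant_strict_mono haS (Set.mem_Ioi.mpr (half_pos ha))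
      (Set.mem_Ioi.mpr (by linarith)) (by intro h; linarith [h.symm.le])
      (by intro h; linarith [h.symm.le]) (by linarith)).le
  set c : ℝ := sInf S with hc
  have key : ∀ t, 0 < t → t ≠ a → f a + c * (t - a) < f t := by
    intro t ht hne
    rcases lt_or_gt_of_ne hne with hlt | hgt
    · -- t < a
      set m : ℝ := (t + a) / 2 with hm
      have hm0 : (0:ℝ) < m := by rw [hm]; linarith
      have h1 : g t < g m :=
        hconv.secant_strict_mono haS (Set.mem_Ioi.mpr ht) (Set.mem_Ioi.mpr hm0)
          hne (by intro h; rw [hm] at h; linarith [h.symm.le]) (by rw [hm]; linarith)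
      have h2 : g m ≤ c := by
        refine le_csInf hSne ?_
        rintro x ⟨s, hs, rfl⟩
        rw [Set.mem_Ioi] at hs
        exact (hconv.secant_strict_mono haS (Set.mem_Ioi.mpr hm0)
          (Set.mem_Ioi.mpr (by linarith))
          (by intro h; rw [hm] at h; linarith [h.symm.le])
          (by intro h; linarith [h.symm.le]) (by rw [hm]; linarith)).le
      have h3 : g t < c := lt_of_lt_of_le h1 h2
      have htane : t - a < 0 := by linarith
      rw [hg] at h3
      simp only at h3
      have := (div_lt_iff_of_neg htane).mp h3
      linarith
    · -- t > a
      set m : ℝ := (a + t) / 2 with hm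
      have hm0 : (0:ℝ) < m := by rw [hm]; linarith
      have h1 : c ≤ g m := csInf_le hbdd ⟨m, Set.mem_Ioi.mpr (by rw [hm]; linarith), rfl⟩
      have h2 : g m < g t :=
        hconv.secant_strict_mono haS (Set.mem_Ioi.mpr hm0) (Set.mem_Ioi.mpr ht)
          (by intro h; rw [hm] at h; linarith [h.symm.le]) hne (by rw [hm]; linarith)
      have h3 : c < g t := lt_of_le_of_lt h1 h2
      have htane : 0 < t - a := by linarith
      rw [hg] at h3
      simp only at h3
      have := (lt_div_iff₀ htane).mp h3
      linarith
  refine ⟨c, fun t ht => ?_, fun t ht heq => ?_⟩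
  · rcases eq_or_ne t a with rfl | hne
    · simp
    · exact (key t ht hne).le
  · by_contra hne
    exact absurd heq (ne_of_lt (key t ht hne))

/-- Fiberwise Jensen inequality with equality characterization. -/
private lemma fiber_jensen {Y : Type*} [MeasurableSpace Y] (ν : Measure Y)
    (f : ℝ → ℝ) (hconv : StrictConvexOn ℝ (Set.Ioi 0) f)
    (p q : Y → ℝ)
    (hpp : ∀ y, 0 < p y) (hqp : ∀ y, 0 < q y)
    (hpi : Integrable p ν) (hqi : Integrable q ν)
    (hPpos : 0 < ∫ y, p y ∂ν) (hQpos : 0 < ∫ y, q y ∂ν)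
    (hint : Integrable (fun y => q y * f (p y / q y)) ν) :
    ((∫ y, q y ∂ν) * f ((∫ y, p y ∂ν) / (∫ y, q y ∂ν)) ≤ ∫ y, q y * f (p y / q y) ∂ν) ∧
    ((∫ y, q y * f (p y / q y) ∂ν = (∫ y, q y ∂ν) * f ((∫ y, p y ∂ν) / (∫ y, q y ∂ν)))
      ↔ ∀ᵐ y ∂ν, p y / q y = (∫ y, p y ∂ν) / (∫ y, q y ∂ν)) := by
  set P : ℝ := ∫ y, p y ∂ν with hP
  set Q : ℝ := ∫ y, q y ∂ν with hQ
  have hQne : Q ≠ 0 := ne_of_gt hQpos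
  set a : ℝ := P / Q with haa
  have ha : 0 < a := div_pos hPpos hQpos
  obtain ⟨c, hcle, hceq⟩ := exists_tangent_line hconv ha
  set g : Y → ℝ := fun y => f a * q y + c * (p y - a * q y) with hgdef
  have hg2 : Integrable (fun y => c * (p y - a * q y)) ν :=
    (hpi.sub (hqi.const_mul a)).const_mul c
  have hgint : Integrable g ν := (hqi.const_mul (f a)).add hg2
  have hgy : ∀ y, q y ≠ 0 → g y = q y * (f a + c * (p y / q y - a)) := by
    intro y hqne
    show f a * q y + c * (p y - a * q y) = _
    rw [mul_add, mul_comm (q y) (f a), mul_left_comm (q y) c, mul_sub (q y),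
      mul_div_cancel₀ _ hqne]
    ring
  have hgval : ∫ y, g y ∂ν = Q * f a := by
    have h1 : ∫ y, g y ∂ν = ∫ y, (f a * q y + c * (p y - a * q y)) ∂ν := rfl
    rw [h1, integral_add (hqi.const_mul (f a)) hg2, integral_const_mul, integral_const_mul,
      integral_sub hpi (hqi.const_mul a), integral_const_mul, ← hP, ← hQ, haa,
      div_mul_cancel₀ _ hQne]
    ring
  have hle : ∀ y, g y ≤ q y * f (p y / q y) := by
    intro y
    have hq := hqp y
    have ht : 0 < p y / q y := div_pos (hpp y) hq
    have h0 := hcle _ ht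
    have h2 : q y * (f a + c * (p y / q y - a)) ≤ q y * f (p y / q y) :=
      mul_le_mul_of_nonneg_left h0 hq.le
    rw [hgy y (ne_of_gt hq)]
    exact h2
  constructor
  · calc Q * f a = ∫ y, g y ∂ν := hgval.symm
      _ ≤ ∫ y, q y * f (p y / q y) ∂ν := integral_mono hgint hint (fun y => hle y)
  · constructor
    · intro heq
      have hzero : ∫ y, (q y * f (p y / q y) - g y) ∂ν = 0 := by
        rw [integral_sub hint hgint, hgval, heq]
        ring
      have hnn : 0 ≤ᵐ[ν] fun y => q y * f (p y / q y) - g y :=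
        Filter.Eventually.of_forall fun y => sub_nonneg.mpr (hle y)
      have haezero := (integral_eq_zero_iff_of_nonneg_ae hnn (hint.sub hgint)).mp hzero
      filter_upwards [haezero] with y hy
      have hq := hqp y
      have hqne : q y ≠ 0 := ne_of_gt hq
      have ht : 0 < p y / q y := div_pos (hpp y) hq
      have hy' : q y * f (p y / q y) = g y := by
        have h := hy
        simp only [Pi.zero_apply] at h
        linarith
      have heqf : f a + c * (p y / q y - a) = f (p y / q y) :=
        mul_left_cancel₀ hqne (by rw [← hgy y hqne, ← hy'])
      exact hceq _ ht heqf
    · intro hae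
      have h : (fun y => q y * f (p y / q y)) =ᵐ[ν] fun y => q y * f a := by
        filter_upwards [hae] with y hy; rw [hy]
      rw [integral_congr_ae h, integral_mul_const, ← hQ]

/-- If `f` is strictly convex and all densities and conditional densities are
positive, then `D_f(P_XY ‖ Q_XY) = D_f(P_X ‖ Q_X)` holds if and only if the conditional
densities agree: `p_{Y|X}(y|x) = q_{Y|X}(y|x)` almost everywhere (the conditional densities
being `p(x,y)/p_X(x)` and `q(x,y)/q_X(x)`). -/
theorem f_divergence_marginal_equality_iff_equal_conditionals
    {X Y : Type*} [MeasurableSpace X] [MeasurableSpace Y]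
    (μ : Measure X) (ν : Measure Y) [SigmaFinite μ] [SigmaFinite ν]
    (f : ℝ → ℝ) (hconv : StrictConvexOn ℝ (Set.Ioi 0) f) (hf1 : f 1 = 0)
    (p q : X × Y → ℝ)
    (hpmeas : Measurable p) (hqmeas : Measurable q)
    (hppos : ∀ z, 0 < p z) (hqpos : ∀ z, 0 < q z)
    -- `p` and `q` are probability densities
    (hp1 : ∫ z, p z ∂(μ.prod ν) = 1) (hq1 : ∫ z, q z ∂(μ.prod ν) = 1)
    -- the marginal densities are finite and positive
    (hpmarg : ∀ x, Integrable (fun y => p (x, y)) ν)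
    (hqmarg : ∀ x, Integrable (fun y => q (x, y)) ν)
    (hpXpos : ∀ x, 0 < ∫ y, p (x, y) ∂ν) (hqXpos : ∀ x, 0 < ∫ y, q (x, y) ∂ν)
    -- the integrals defining the `f`-divergences are well defined
    (hintXY : Integrable (fun z : X × Y => q z * f (p z / q z)) (μ.prod ν))
    (hintX : Integrable (fun x =>
      (∫ y, q (x, y) ∂ν) * f ((∫ y, p (x, y) ∂ν) / (∫ y, q (x, y) ∂ν))) μ) :
    (∫ z : X × Y, q z * f (p z / q z) ∂(μ.prod ν)
        = ∫ x, (∫ y, q (x, y) ∂ν) * f ((∫ y, p (x, y) ∂ν) / (∫ y, q (x, y) ∂ν)) ∂μ)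
      ↔ (∀ᵐ z ∂(μ.prod ν),
          p z / (∫ y, p (z.1, y) ∂ν) = q z / (∫ y, q (z.1, y) ∂ν)) := by
  set pX : X → ℝ := fun x => ∫ y, p (x, y) ∂ν with hpX
  set qX : X → ℝ := fun x => ∫ y, q (x, y) ∂ν with hqX
  set A : X → ℝ := fun x => ∫ y, q (x, y) * f (p (x, y) / q (x, y)) ∂ν with hA
  set B : X → ℝ := fun x => qX x * f (pX x / qX x) with hB
  have hpXmeas : Measurable pX := (hpmeas.stronglyMeasurable.integral_prod_right').measurable
  have hqXmeas : Measurable qX := (hqmeas.stronglyMeasurable.integral_prod_right').measurable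
  have hEmeas : MeasurableSet {z : X × Y | p z / q z = pX z.1 / qX z.1} := by
    apply measurableSet_eq_fun
    · exact hpmeas.div hqmeas
    · exact (hpXmeas.comp measurable_fst).div (hqXmeas.comp measurable_fst)
  have hFub : ∫ z : X × Y, q z * f (p z / q z) ∂(μ.prod ν) = ∫ x, A x ∂μ :=
    integral_prod _ hintXY
  have hAint : Integrable A μ := hintXY.integral_prod_left
  have hBint : Integrable B μ := hintX
  have hfiber : ∀ᵐ x ∂μ, Integrable (fun y => q (x, y) * f (p (x, y) / q (x, y))) ν :=
    hintXY.prod_right_ae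
  have hBA : ∀ᵐ x ∂μ, B x ≤ A x ∧
      (A x = B x ↔ ∀ᵐ y ∂ν, p (x, y) / q (x, y) = pX x / qX x) := by
    filter_upwards [hfiber] with x hx
    exact fiber_jensen ν f hconv (fun y => p (x, y)) (fun y => q (x, y))
      (fun y => hppos _) (fun y => hqpos _) (hpmarg x) (hqmarg x)
      (hpXpos x) (hqXpos x) hx
  rw [hFub]
  have hgoalE : (∀ᵐ z ∂(μ.prod ν), p z / pX z.1 = q z / qX z.1)
      ↔ ∀ᵐ z ∂(μ.prod ν), p z / q z = pX z.1 / qX z.1 := by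
    apply Filter.eventually_congr
    apply Filter.Eventually.of_forall
    intro z
    have h1 := hppos z; have h2 := hqpos z; have h3 := hpXpos z.1; have h4 := hqXpos z.1
    rw [div_eq_div_iff (ne_of_gt h3) (ne_of_gt h4), div_eq_div_iff (ne_of_gt h2) (ne_of_gt h4)]
    constructor <;> intro h <;> linarith
  rw [hgoalE, Measure.ae_prod_iff_ae_ae hEmeas]
  constructor
  · intro heq
    have hzero : ∫ x, (A x - B x) ∂μ = 0 := by
      rw [integral_sub hAint hBint, heq]
      ring
    have hnn : 0 ≤ᵐ[μ] fun x => A x - B x := by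
      filter_upwards [hBA] with x hx using sub_nonneg.mpr hx.1
    have haezero := (integral_eq_zero_iff_of_nonneg_ae hnn (hAint.sub hBint)).mp hzero
    filter_upwards [haezero, hBA] with x h1 h2
    refine h2.2.mp ?_
    simp only [Pi.zero_apply] at h1
    linarith
  · intro hae
    have h : A =ᵐ[μ] B := by
      filter_upwards [hae, hBA] with x h1 h2 using h2.2.mpr h1
    exact integral_congr_ae h
end

section
/- If f is strictly convex and all relevant densities and conditional densities are positive, then I_f(X;Y) = I_f(g(X);Y) if and only if Y and X are conditionally independent given g(X). -/
/-!
Write `q = p_X p_Y`, `T = (g, id)` and `u = p_{GY} / (p_G p_Y)`. Because `(g(X), Y)` has density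
`p_{GY}` and `g(X)` has density `p_G`, the measures with densities `p_{XY}` and `q · (u ∘ T)` have
the same image under `T`, and `I_f(g(X);Y) = ∫ q f(u ∘ T)`. With `c` the right derivative of `f`
at `u ∘ T`, the difference `I_f(X;Y) - I_f(g(X);Y)` is then the integral of
`q (f(p_{XY}/q) - f(u ∘ T)) - (c ∘ T) (p_{XY} - q (u ∘ T))`, since the last term integrates to
zero: `c ∘ T` factors through `T`. By strict convexity this integrand is nonnegative and vanishes
exactly where `p_{XY} / q = u ∘ T`, which is the conditional independence.
-/

open MeasureTheory Set Filter
open scoped ENNReal Topology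

lemma StrictConvexOn.add_rightDeriv_mul_sub_lt {S : Set ℝ} {f : ℝ → ℝ}
    (hf : StrictConvexOn ℝ S f) {a b : ℝ} (ha : a ∈ S) (hb : b ∈ interior S) (hab : a ≠ b) :
    f b + derivWithin f (Ioi b) b * (a - b) < f a := by
  rcases hab.lt_or_gt with hab | hba
  · have hslope : slope f a b < derivWithin f (Ioi b) b :=
      (hf.slope_lt_leftDeriv ha (interior_subset hb) hab
        (hf.convexOn.hasDerivWithinAt_leftDeriv_of_mem_interior hb).differentiableWithinAt
        ).trans_le (hf.convexOn.leftDeriv_le_rightDeriv_of_mem_interior hb)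
    rw [slope_def_field, div_lt_iff₀ (sub_pos.2 hab)] at hslope
    linear_combination hslope
  · have hslope : derivWithin f (Ioi b) b < slope f b a :=
      hf.rightDeriv_lt_slope (interior_subset hb) ha hba
        (hf.convexOn.hasDerivWithinAt_rightDeriv_of_mem_interior hb).differentiableWithinAt
    rw [slope_def_field, lt_div_iff₀ (sub_pos.2 hba)] at hslope
    linear_combination hslope

section Perspective

variable {f : ℝ → ℝ} {p q b : ℝ}

lemma StrictConvexOn.mul_add_rightDeriv_mul_sub_lt (hf : StrictConvexOn ℝ (Ioi 0) f)
    (hp : 0 < p) (hq : 0 < q) (hb : 0 < b) (hne : p / q ≠ b) :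
    q * f b + derivWithin f (Ioi b) b * (p - q * b) < q * f (p / q) := by
  calc q * f b + derivWithin f (Ioi b) b * (p - q * b)
      = q * (f b + derivWithin f (Ioi b) b * (p / q - b)) := by field_simp
    _ < q * f (p / q) := mul_lt_mul_of_pos_left
        (hf.add_rightDeriv_mul_sub_lt (div_pos hp hq) (by rwa [interior_Ioi]) hne) hq

lemma StrictConvexOn.mul_add_rightDeriv_mul_sub_le (hf : StrictConvexOn ℝ (Ioi 0) f)
    (hp : 0 < p) (hq : 0 < q) (hb : 0 < b) :
    q * f b + derivWithin f (Ioi b) b * (p - q * b) ≤ q * f (p / q) := by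
  rcases eq_or_ne (p / q) b with rfl | hne
  · rw [mul_div_cancel₀ _ hq.ne', sub_self, mul_zero, add_zero]
  · exact (hf.mul_add_rightDeriv_mul_sub_lt hp hq hb hne).le

end Perspective

section WithDensity

variable {Ω Ω₁ Ω₂ : Type*} [MeasurableSpace Ω] [MeasurableSpace Ω₁] [MeasurableSpace Ω₂]
  {m : Measure Ω} {m₁ : Measure Ω₁} {m₂ : Measure Ω₂}

lemma integral_mul_comp_eq_integral_map_withDensity {T : Ω → Ω₂} (hT : Measurable T)
    {p : Ω → ℝ} (hp : Measurable p) (hp0 : ∀ z, 0 ≤ p z) {φ : Ω₂ → ℝ} (hφ : Measurable φ) :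
    ∫ z, p z * φ (T z) ∂m = ∫ w, φ w ∂(m.withDensity fun z => ENNReal.ofReal (p z)).map T := by
  rw [integral_map hT.aemeasurable hφ.aestronglyMeasurable,
    integral_withDensity_eq_integral_toReal_smul hp.ennreal_ofReal
      (ae_of_all _ fun _ => ENNReal.ofReal_lt_top)]
  simp only [ENNReal.toReal_ofReal (hp0 _), smul_eq_mul]

lemma integrable_mul_comp_iff_integrable_map_withDensity {T : Ω → Ω₂} (hT : Measurable T)
    {p : Ω → ℝ} (hp : Measurable p) (hp0 : ∀ z, 0 ≤ p z) {φ : Ω₂ → ℝ} (hφ : Measurable φ) :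
    Integrable (fun z => p z * φ (T z)) m ↔
      Integrable φ ((m.withDensity fun z => ENNReal.ofReal (p z)).map T) := by
  rw [integrable_map_measure hφ.aestronglyMeasurable hT.aemeasurable,
    integrable_withDensity_iff_integrable_smul' hp.ennreal_ofReal
      (ae_of_all _ fun _ => ENNReal.ofReal_lt_top)]
  simp only [Function.comp_apply, ENNReal.toReal_ofReal (hp0 _), smul_eq_mul]

variable {T₁ : Ω₁ → Ω} {T₂ : Ω₂ → Ω} {p₁ : Ω₁ → ℝ} {p₂ : Ω₂ → ℝ}

lemma integral_mul_comp_eq_of_map_withDensity_eq (hT₁ : Measurable T₁) (hT₂ : Measurable T₂)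
    (hp₁ : Measurable p₁) (hp₂ : Measurable p₂) (hp₁0 : ∀ z, 0 ≤ p₁ z) (hp₂0 : ∀ z, 0 ≤ p₂ z)
    (hmap : (m₁.withDensity fun z => ENNReal.ofReal (p₁ z)).map T₁
      = (m₂.withDensity fun z => ENNReal.ofReal (p₂ z)).map T₂)
    {φ : Ω → ℝ} (hφ : Measurable φ) :
    ∫ z, p₁ z * φ (T₁ z) ∂m₁ = ∫ z, p₂ z * φ (T₂ z) ∂m₂ := by
  rw [integral_mul_comp_eq_integral_map_withDensity hT₁ hp₁ hp₁0 hφ,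
    integral_mul_comp_eq_integral_map_withDensity hT₂ hp₂ hp₂0 hφ, hmap]

lemma integrable_mul_comp_iff_of_map_withDensity_eq (hT₁ : Measurable T₁)
    (hT₂ : Measurable T₂) (hp₁ : Measurable p₁) (hp₂ : Measurable p₂)
    (hp₁0 : ∀ z, 0 ≤ p₁ z) (hp₂0 : ∀ z, 0 ≤ p₂ z)
    (hmap : (m₁.withDensity fun z => ENNReal.ofReal (p₁ z)).map T₁
      = (m₂.withDensity fun z => ENNReal.ofReal (p₂ z)).map T₂)
    {φ : Ω → ℝ} (hφ : Measurable φ) :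
    Integrable (fun z => p₁ z * φ (T₁ z)) m₁ ↔ Integrable (fun z => p₂ z * φ (T₂ z)) m₂ := by
  rw [integrable_mul_comp_iff_integrable_map_withDensity hT₁ hp₁ hp₁0 hφ,
    integrable_mul_comp_iff_integrable_map_withDensity hT₂ hp₂ hp₂0 hφ, hmap]

lemma integrable_iff_of_map_withDensity_eq (hT₁ : Measurable T₁)
    (hT₂ : Measurable T₂) (hp₁ : Measurable p₁) (hp₂ : Measurable p₂)
    (hp₁0 : ∀ z, 0 ≤ p₁ z) (hp₂0 : ∀ z, 0 ≤ p₂ z)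
    (hmap : (m₁.withDensity fun z => ENNReal.ofReal (p₁ z)).map T₁
      = (m₂.withDensity fun z => ENNReal.ofReal (p₂ z)).map T₂) :
    Integrable p₁ m₁ ↔ Integrable p₂ m₂ := by
  simpa using integrable_mul_comp_iff_of_map_withDensity_eq hT₁ hT₂ hp₁ hp₂ hp₁0 hp₂0 hmap
    (φ := fun _ => (1 : ℝ)) measurable_const

end WithDensity

lemma ContinuousOn.measurable_comp {α β γ : Type*} [MeasurableSpace α] [TopologicalSpace β]
    [MeasurableSpace β] [OpensMeasurableSpace β] [TopologicalSpace γ] [MeasurableSpace γ]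
    [BorelSpace γ] {f : β → γ} {s : Set β} (hf : ContinuousOn f s) {u : α → β}
    (hu : Measurable u) (hus : ∀ a, u a ∈ s) : Measurable fun a => f (u a) :=
  (continuousOn_iff_continuous_domRestrict.1 hf).measurable.comp (hu.subtype_mk (h := hus))

section Marginal

variable {α β γ : Type*} [MeasurableSpace α] [MeasurableSpace β] [MeasurableSpace γ]
  {μ : Measure α} {ν : Measure β} {ρ : Measure γ} [SFinite ν]

lemma map_fst_withDensity_ofReal [SFinite μ] {p : α × β → ℝ} (hp : Integrable p (μ.prod ν))
    (hp0 : ∀ z, 0 ≤ p z) {q : α → ℝ} (hq : ∀ᵐ x ∂μ, ∫ y, p (x, y) ∂ν = q x) :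
    ((μ.prod ν).withDensity fun z => ENNReal.ofReal (p z)).map Prod.fst
      = μ.withDensity fun x => ENNReal.ofReal (q x) := by
  ext s hs
  have hmeas := hp.aemeasurable.ennreal_ofReal.restrict (s := s ×ˢ univ)
  rw [← Measure.prod_restrict, Measure.restrict_univ] at hmeas
  rw [Measure.map_apply measurable_fst hs, withDensity_apply _ (measurable_fst hs),
    withDensity_apply _ hs, ← prod_univ, ← Measure.prod_restrict, Measure.restrict_univ,
    lintegral_prod _ hmeas]
  refine lintegral_congr_ae (ae_restrict_of_ae ?_)
  filter_upwards [hq, hp.prod_right_ae] with x hx hint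
  rw [← ofReal_integral_eq_lintegral_ofReal hint (ae_of_all _ fun y => hp0 (x, y)), hx]

lemma map_withDensity_comp {T : α → γ} (hT : Measurable T) {h : γ → ℝ≥0∞} (hh : Measurable h) :
    (μ.withDensity (h ∘ T)).map T = (μ.map T).withDensity h := by
  ext s hs
  rw [Measure.map_apply hT hs, withDensity_apply _ (hT hs), withDensity_apply _ hs,
    setLIntegral_map hs hh hT]
  rfl

lemma map_prod_withDensity_mul_comp [SFinite μ] [SFinite ρ] {g : α → γ} (hg : Measurable g)
    {a : α → ℝ≥0∞} {b : γ → ℝ≥0∞} (ha : Measurable a) (hb : Measurable b)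
    (hmarg : (μ.withDensity a).map g = ρ.withDensity b) {h : γ × β → ℝ≥0∞} (hh : Measurable h) :
    ((μ.prod ν).withDensity fun z => a z.1 * h (g z.1, z.2)).map (fun z => (g z.1, z.2))
      = (ρ.prod ν).withDensity fun w => b w.1 * h w := by
  have hT : Measurable (Prod.map g id : α × β → γ × β) := hg.prodMap measurable_id
  calc ((μ.prod ν).withDensity fun z => a z.1 * h (g z.1, z.2)).map (fun z => (g z.1, z.2))
      = (((μ.withDensity a).prod ν).withDensity (h ∘ Prod.map g id)).map (Prod.map g id) := by
        rw [prod_withDensity_left ha, ← withDensity_mul _ (f := fun z => a z.1)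
          (by fun_prop) (hh.comp hT)]
        rfl
    _ = ((ρ.withDensity b).prod ν).withDensity h := by
        rw [map_withDensity_comp hT hh, ← Measure.map_prod_map _ _ hg measurable_id, hmarg,
          Measure.map_id]
    _ = (ρ.prod ν).withDensity fun w => b w.1 * h w := by
        rw [prod_withDensity_left hb, ← withDensity_mul _ (f := fun w => b w.1)
          (by fun_prop) hh]
        rfl

lemma map_prod_withDensity_ofReal_mul_comp [SFinite μ] [SFinite ρ] {g : α → γ}
    (hg : Measurable g) {a : α → ℝ} {b : γ → ℝ} (ha : Measurable a) (hb : Measurable b)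
    (ha0 : ∀ x, 0 ≤ a x) (hb0 : ∀ v, 0 ≤ b v)
    (hmarg : (μ.withDensity fun x => ENNReal.ofReal (a x)).map g
      = ρ.withDensity fun v => ENNReal.ofReal (b v))
    {h : γ × β → ℝ} (hh : Measurable h) :
    ((μ.prod ν).withDensity fun z => ENNReal.ofReal (a z.1 * h (g z.1, z.2))).map
        (fun z => (g z.1, z.2))
      = (ρ.prod ν).withDensity fun w => ENNReal.ofReal (b w.1 * h w) := by
  simp only [ENNReal.ofReal_mul (ha0 _), ENNReal.ofReal_mul (hb0 _)]
  exact map_prod_withDensity_mul_comp hg ha.ennreal_ofReal hb.ennreal_ofReal hmarg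
    (h := fun w => ENNReal.ofReal (h w)) hh.ennreal_ofReal

lemma integral_mul_mul_comp_eq_of_map_withDensity [SFinite μ] [SFinite ρ] {g : α → γ}
    (hg : Measurable g) {a : α → ℝ} {b : γ → ℝ} (ha : Measurable a) (hb : Measurable b)
    (ha0 : ∀ x, 0 ≤ a x) (hb0 : ∀ v, 0 ≤ b v)
    (hmarg : (μ.withDensity fun x => ENNReal.ofReal (a x)).map g
      = ρ.withDensity fun v => ENNReal.ofReal (b v))
    {k : β → ℝ} (hk : Measurable k) (hk0 : ∀ y, 0 ≤ k y) {φ : γ × β → ℝ} (hφ : Measurable φ) :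
    ∫ z, a z.1 * k z.2 * φ (g z.1, z.2) ∂(μ.prod ν) = ∫ w, b w.1 * k w.2 * φ w ∂(ρ.prod ν) :=
  integral_mul_comp_eq_of_map_withDensity_eq ((hg.comp measurable_fst).prodMk measurable_snd)
    measurable_id (by fun_prop) (by fun_prop) (fun z => mul_nonneg (ha0 _) (hk0 _))
    (fun w => mul_nonneg (hb0 _) (hk0 _))
    ((map_prod_withDensity_ofReal_mul_comp hg ha hb ha0 hb0 hmarg (h := fun w => k w.2)
      (hk.comp measurable_snd)).trans Measure.map_id.symm) hφ

lemma integrable_mul_mul_comp_iff_of_map_withDensity [SFinite μ] [SFinite ρ] {g : α → γ}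
    (hg : Measurable g) {a : α → ℝ} {b : γ → ℝ} (ha : Measurable a) (hb : Measurable b)
    (ha0 : ∀ x, 0 ≤ a x) (hb0 : ∀ v, 0 ≤ b v)
    (hmarg : (μ.withDensity fun x => ENNReal.ofReal (a x)).map g
      = ρ.withDensity fun v => ENNReal.ofReal (b v))
    {k : β → ℝ} (hk : Measurable k) (hk0 : ∀ y, 0 ≤ k y) {φ : γ × β → ℝ} (hφ : Measurable φ) :
    Integrable (fun z => a z.1 * k z.2 * φ (g z.1, z.2)) (μ.prod ν) ↔
      Integrable (fun w => b w.1 * k w.2 * φ w) (ρ.prod ν) :=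
  integrable_mul_comp_iff_of_map_withDensity_eq ((hg.comp measurable_fst).prodMk measurable_snd)
    measurable_id (by fun_prop) (by fun_prop) (fun z => mul_nonneg (ha0 _) (hk0 _))
    (fun w => mul_nonneg (hb0 _) (hk0 _))
    ((map_prod_withDensity_ofReal_mul_comp hg ha hb ha0 hb0 hmarg (h := fun w => k w.2)
      (hk.comp measurable_snd)).trans Measure.map_id.symm) hφ

lemma map_withDensity_ofReal_eq_of_map_prod [SFinite μ] [SFinite ρ] {g : α → γ}
    (hg : Measurable g) {p : α × β → ℝ} {p' : γ × β → ℝ} (hp : Measurable p)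
    (hp' : Measurable p') (hp0 : ∀ z, 0 ≤ p z) (hp'0 : ∀ w, 0 ≤ p' w)
    (hpint : Integrable p (μ.prod ν))
    (hmap : ((μ.prod ν).withDensity fun z => ENNReal.ofReal (p z)).map (fun z => (g z.1, z.2))
      = (ρ.prod ν).withDensity fun w => ENNReal.ofReal (p' w))
    {a : α → ℝ} {b : γ → ℝ} (ha : ∀ᵐ x ∂μ, ∫ y, p (x, y) ∂ν = a x)
    (hb : ∀ᵐ v ∂ρ, ∫ y, p' (v, y) ∂ν = b v) :
    (μ.withDensity fun x => ENNReal.ofReal (a x)).map g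
      = ρ.withDensity fun v => ENNReal.ofReal (b v) := by
  have hT : Measurable fun z : α × β => (g z.1, z.2) :=
    (hg.comp measurable_fst).prodMk measurable_snd
  have hp'int : Integrable p' (ρ.prod ν) :=
    (integrable_iff_of_map_withDensity_eq hT measurable_id hp hp' hp0 hp'0
      (hmap.trans Measure.map_id.symm)).1 hpint
  rw [← map_fst_withDensity_ofReal hpint hp0 ha, ← map_fst_withDensity_ofReal hp'int hp'0 hb,
    ← hmap, Measure.map_map measurable_fst hT, Measure.map_map hg measurable_fst]
  rfl

end Marginal

section Truncation

variable {Ω : Type*} [MeasurableSpace Ω] {m : Measure Ω}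

lemma ae_eq_zero_of_setIntegral_eq_of_integral_eq_zero {D G : Ω → ℝ} {F : ℕ → Set Ω}
    (hF : ∀ n, MeasurableSet (F n)) (hmono : Monotone F) (hcover : ⋃ n, F n = univ)
    (hD : ∀ z, 0 ≤ D z) (hDint : ∀ n, IntegrableOn D (F n) m) (hG : Integrable G m)
    (hG0 : ∫ z, G z ∂m = 0) (hDG : ∀ n, ∫ z in F n, D z ∂m = ∫ z in F n, G z ∂m) :
    D =ᵐ[m] 0 := by
  have hlim : Tendsto (fun n => ∫ z in F n, G z ∂m) atTop (𝓝 0) := by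
    have := tendsto_setIntegral_of_monotone hF hmono (by rw [hcover]; exact hG.integrableOn)
    rwa [hcover, setIntegral_univ, hG0] at this
  have hle : ∀ n, ∫ z in F n, D z ∂m ≤ 0 := fun n =>
    ge_of_tendsto hlim (eventually_atTop.2 ⟨n, fun k hk =>
      (setIntegral_mono_set (hDint k) (ae_of_all _ fun z => hD z)
        (ae_of_all _ (hmono hk))).trans_eq (hDG k)⟩)
  have hzero : ∀ n, ∀ᵐ z ∂m.restrict (F n), D z = 0 := fun n =>
    (setIntegral_eq_zero_iff_of_nonneg_ae (ae_of_all _ hD) (hDint n)).1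
      (le_antisymm (hle n) (setIntegral_nonneg (hF n) fun z _ => hD z))
  have := (ae_restrict_iUnion_iff F _).2 hzero
  rwa [hcover, Measure.restrict_univ] at this

end Truncation

section Jensen

variable {Ω Ω' : Type*} [MeasurableSpace Ω] [MeasurableSpace Ω'] {m : Measure Ω}
  {T : Ω → Ω'} {p s : Ω → ℝ}

lemma integrableOn_and_setIntegral_comp_mul_sub_eq_zero (hT : Measurable T)
    (hp : Measurable p) (hs : Measurable s) (hp0 : ∀ z, 0 ≤ p z) (hs0 : ∀ z, 0 ≤ s z)
    (hpint : Integrable p m) (hsint : Integrable s m)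
    (hmap : (m.withDensity fun z => ENNReal.ofReal (p z)).map T
      = (m.withDensity fun z => ENNReal.ofReal (s z)).map T)
    {c : Ω' → ℝ} (hc : Measurable c) (C : ℝ) :
    IntegrableOn (fun z => c (T z) * (p z - s z)) (T ⁻¹' {w | |c w| ≤ C}) m ∧
      ∫ z in T ⁻¹' {w | |c w| ≤ C}, c (T z) * (p z - s z) ∂m = 0 := by
  have hE : MeasurableSet {w | |c w| ≤ C} := measurableSet_le hc.abs measurable_const
  set ψ : Ω' → ℝ := {w | |c w| ≤ C}.indicator c
  have hψ : Measurable ψ := hc.indicator hE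
  have hψle : ∀ z, ‖ψ (T z)‖ ≤ |C| := fun z => by
    by_cases hz : |c (T z)| ≤ C
    · simpa [ψ, hz] using hz.trans (le_abs_self C)
    · simp [ψ, hz]
  have hpψ : Integrable (fun z => p z * ψ (T z)) m :=
    hpint.mul_bdd (hψ.comp hT).aestronglyMeasurable (ae_of_all _ hψle)
  have hsψ : Integrable (fun z => s z * ψ (T z)) m :=
    hsint.mul_bdd (hψ.comp hT).aestronglyMeasurable (ae_of_all _ hψle)
  have hind : ∀ z, (T ⁻¹' {w | |c w| ≤ C}).indicator (fun z => c (T z) * (p z - s z)) z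
      = p z * ψ (T z) - s z * ψ (T z) := fun z => by
    by_cases hz : |c (T z)| ≤ C
    · simp [ψ, hz]
      ring
    · simp [ψ, hz]
  have hint : Integrable (fun z => p z * ψ (T z) - s z * ψ (T z)) m := hpψ.sub hsψ
  refine ⟨(integrable_indicator_iff (hT hE)).1 (hint.congr (ae_of_all _ fun z => (hind z).symm)),
    ?_⟩
  rw [← integral_indicator (hT hE), integral_congr_ae (ae_of_all _ hind), integral_sub hpψ hsψ,
    integral_mul_comp_eq_of_map_withDensity_eq hT hT hp hs hp0 hs0 hmap hψ, sub_self]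

variable {f : ℝ → ℝ} {q : Ω → ℝ} {u : Ω' → ℝ}

theorem StrictConvexOn.integral_mul_eq_iff_ae_eq_comp (hf : StrictConvexOn ℝ (Ioi 0) f)
    (hT : Measurable T) (hp : Measurable p) (hq : Measurable q) (hu : Measurable u)
    (hp0 : ∀ z, 0 < p z) (hq0 : ∀ z, 0 < q z) (hu0 : ∀ w, 0 < u w) (hpint : Integrable p m)
    (hmap : (m.withDensity fun z => ENNReal.ofReal (p z)).map T
      = (m.withDensity fun z => ENNReal.ofReal (q z * u (T z))).map T)
    (hfp : Integrable (fun z => q z * f (p z / q z)) m)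
    (hfu : Integrable (fun z => q z * f (u (T z))) m) :
    ∫ z, q z * f (p z / q z) ∂m = ∫ z, q z * f (u (T z)) ∂m ↔
      ∀ᵐ z ∂m, p z / q z = u (T z) := by
  refine ⟨fun heq => ?_, fun h => integral_congr_ae (h.mono fun z hz => by simp only [hz])⟩
  have hs : Measurable fun z => q z * u (T z) := hq.mul (hu.comp hT)
  have hs0 : ∀ z, 0 ≤ q z * u (T z) := fun z => (mul_pos (hq0 z) (hu0 _)).le
  have hsint : Integrable (fun z => q z * u (T z)) m :=
    (integrable_iff_of_map_withDensity_eq hT hT hp hs (fun z => (hp0 z).le) hs0 hmap).1 hpint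
  set c : Ω' → ℝ := fun w => derivWithin f (Ioi (u w)) (u w)
  have hc : Measurable c := (measurable_derivWithin_Ioi f).comp hu
  set G : Ω → ℝ := fun z => q z * f (p z / q z) - q z * f (u (T z))
  have hG : Integrable G m := hfp.sub hfu
  have horth (n : ℕ) := integrableOn_and_setIntegral_comp_mul_sub_eq_zero hT hp hs
    (fun z => (hp0 z).le) hs0 hpint hsint hmap hc n
  -- `c` may be unbounded, so the linear term is only integrable on the sets where `|c| ≤ n`.
  have hgap : (fun z => G z - c (T z) * (p z - q z * u (T z))) =ᵐ[m] 0 := by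
    refine ae_eq_zero_of_setIntegral_eq_of_integral_eq_zero
      (fun n => hT (measurableSet_le hc.abs measurable_const))
      (fun k n hkn z (hz : |c (T z)| ≤ k) => hz.trans (Nat.cast_le.2 hkn))
      (eq_univ_of_forall fun z => mem_iUnion.2 (exists_nat_ge |c (T z)|))
      (fun z => ?_) (fun n => hG.integrableOn.sub (horth n).1) hG
      (by rw [integral_sub hfp hfu, heq, sub_self])
      (fun n => by rw [integral_sub hG.integrableOn (horth n).1, (horth n).2, sub_zero])
    have := hf.mul_add_rightDeriv_mul_sub_le (hp0 z) (hq0 z) (hu0 (T z))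
    simp only [G, c]
    linarith
  filter_upwards [hgap] with z hz
  by_contra hne
  have := hf.mul_add_rightDeriv_mul_sub_lt (hp0 z) (hq0 z) (hu0 (T z)) hne
  simp only [G, c, Pi.zero_apply] at hz
  linarith

end Jensen

theorem f_mutual_information_equality_iff_cond_indep_general
    {X Y : Type*} [MeasurableSpace X] [MeasurableSpace Y] (d : ℕ)
    (μ : Measure X) (ν : Measure Y) (ρ : Measure (Fin d → ℝ))
    [SigmaFinite μ] [SigmaFinite ν] [SigmaFinite ρ]
    (f : ℝ → ℝ) (hconv : StrictConvexOn ℝ (Set.Ioi 0) f)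
    (g : X → (Fin d → ℝ)) (hg : Measurable g)
    (pXY : X × Y → ℝ) (pGY : (Fin d → ℝ) × Y → ℝ)
    (pX : X → ℝ) (pY : Y → ℝ) (pG : (Fin d → ℝ) → ℝ)
    (hpXYmeas : Measurable pXY) (hpGYmeas : Measurable pGY)
    (hpXmeas : Measurable pX) (hpYmeas : Measurable pY) (hpGmeas : Measurable pG)
    (hpXYpos : ∀ z, 0 < pXY z) (hpGYpos : ∀ w, 0 < pGY w)
    (hpXpos : ∀ x, 0 < pX x) (hpYpos : ∀ y, 0 < pY y) (hpGpos : ∀ v, 0 < pG v)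
    -- `pXY` is a probability density
    (hp1 : ∫ z, pXY z ∂(μ.prod ν) = 1)
    -- `pGY` is the joint density of `(g(X), Y)`
    (hmap : Measure.map (fun z : X × Y => (g z.1, z.2))
        ((μ.prod ν).withDensity fun z => ENNReal.ofReal (pXY z))
      = (ρ.prod ν).withDensity fun w => ENNReal.ofReal (pGY w))
    -- marginal densities
    (hpXmarg : ∀ᵐ x ∂μ, ∫ y, pXY (x, y) ∂ν = pX x)
    (hpGmarg : ∀ᵐ v ∂ρ, ∫ y, pGY (v, y) ∂ν = pG v)
    -- the integrals defining the `f`-mutual informations are well defined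
    (hintXY : Integrable (fun z : X × Y =>
      pX z.1 * pY z.2 * f (pXY z / (pX z.1 * pY z.2))) (μ.prod ν))
    (hintGY : Integrable (fun w : (Fin d → ℝ) × Y =>
      pG w.1 * pY w.2 * f (pGY w / (pG w.1 * pY w.2))) (ρ.prod ν)) :
    (∫ z : X × Y, pX z.1 * pY z.2 * f (pXY z / (pX z.1 * pY z.2)) ∂(μ.prod ν)
        = ∫ w : (Fin d → ℝ) × Y,
            pG w.1 * pY w.2 * f (pGY w / (pG w.1 * pY w.2)) ∂(ρ.prod ν))
      ↔ (∀ᵐ z ∂(μ.prod ν), pXY z * pG (g z.1) = pGY (g z.1, z.2) * pX z.1) := by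
  have hT : Measurable fun z : X × Y => (g z.1, z.2) :=
    (hg.comp measurable_fst).prodMk measurable_snd
  have hpX0 (x : X) : 0 ≤ pX x := (hpXpos x).le
  have hpY0 (y : Y) : 0 ≤ pY y := (hpYpos y).le
  have hpG0 (v : Fin d → ℝ) : 0 ≤ pG v := (hpGpos v).le
  have hpXY : Integrable pXY (μ.prod ν) := .of_integral_ne_zero (by simp [hp1])
  have hmarg := map_withDensity_ofReal_eq_of_map_prod hg hpXYmeas hpGYmeas
    (fun z => (hpXYpos z).le) (fun w => (hpGYpos w).le) hpXY hmap hpXmarg hpGmarg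
  have hu : Measurable fun w : (Fin d → ℝ) × Y => pGY w / (pG w.1 * pY w.2) := by fun_prop
  have hu0 (w : (Fin d → ℝ) × Y) : 0 < pGY w / (pG w.1 * pY w.2) :=
    div_pos (hpGYpos w) (mul_pos (hpGpos _) (hpYpos _))
  have hfu := (hconv.convexOn.continuousOn isOpen_Ioi).measurable_comp hu hu0
  rw [← integral_mul_mul_comp_eq_of_map_withDensity hg hpXmeas hpGmeas hpX0 hpG0 hmarg hpYmeas
    hpY0 hfu]
  refine (hconv.integral_mul_eq_iff_ae_eq_comp hT hpXYmeas (by fun_prop) hu hpXYpos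
    (fun z => mul_pos (hpXpos _) (hpYpos _)) hu0 hpXY ?_ hintXY
    ((integrable_mul_mul_comp_iff_of_map_withDensity hg hpXmeas hpGmeas hpX0 hpG0 hmarg hpYmeas
      hpY0 hfu).2 hintGY)).trans (eventually_congr (ae_of_all _ fun z => ?_))
  · rw [hmap]
    convert (map_prod_withDensity_ofReal_mul_comp hg hpXmeas hpGmeas hpX0 hpG0 hmarg (ν := ν)
      (h := fun w => pGY w / pG w.1) (by fun_prop)).symm using 3 with w
    · rw [mul_div_cancel₀ _ (hpGpos _).ne']
    · funext z
      have := (hpYpos z.2).ne'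
      field_simp
  · dsimp only
    rw [← div_div, ← div_div, div_left_inj' (hpYpos _).ne',
      div_eq_div_iff (hpXpos _).ne' (hpGpos _).ne']

/-- If `f` is strictly convex and all relevant densities and conditional
densities are positive, then `I_f(X;Y) = I_f(g(X);Y)` if and only if `Y` and `X` are
conditionally independent given `g(X)`.

Conditional independence `Y ⊥ X | g(X)` is expressed at the density level as
`p_{Y|X}(y|x) = p_{Y|g(X)}(y|g(x))` a.e., i.e.
`pXY(x,y) * pG(g(x)) = pGY(g(x),y) * pX(x)` a.e. -/
theorem f_mutual_information_equality_iff_cond_indep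
    {X Y : Type*} [MeasurableSpace X] [MeasurableSpace Y] (d : ℕ)
    (μ : Measure X) (ν : Measure Y) (ρ : Measure (Fin d → ℝ))
    [SigmaFinite μ] [SigmaFinite ν] [SigmaFinite ρ]
    (f : ℝ → ℝ) (hconv : StrictConvexOn ℝ (Set.Ioi 0) f) (hf1 : f 1 = 0)
    (g : X → (Fin d → ℝ)) (hg : Measurable g)
    (pXY : X × Y → ℝ) (pGY : (Fin d → ℝ) × Y → ℝ)
    (pX : X → ℝ) (pY : Y → ℝ) (pG : (Fin d → ℝ) → ℝ)
    (hpXYmeas : Measurable pXY) (hpGYmeas : Measurable pGY)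
    (hpXmeas : Measurable pX) (hpYmeas : Measurable pY) (hpGmeas : Measurable pG)
    (hpXYpos : ∀ z, 0 < pXY z) (hpGYpos : ∀ w, 0 < pGY w)
    (hpXpos : ∀ x, 0 < pX x) (hpYpos : ∀ y, 0 < pY y) (hpGpos : ∀ v, 0 < pG v)
    -- `pXY` is a probability density
    (hp1 : ∫ z, pXY z ∂(μ.prod ν) = 1)
    -- `pGY` is the joint density of `(g(X), Y)`
    (hmap : Measure.map (fun z : X × Y => (g z.1, z.2))
        ((μ.prod ν).withDensity fun z => ENNReal.ofReal (pXY z))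
      = (ρ.prod ν).withDensity fun w => ENNReal.ofReal (pGY w))
    -- marginal densities
    (hpXmarg : ∀ᵐ x ∂μ, ∫ y, pXY (x, y) ∂ν = pX x)
    (hpYmarg : ∀ᵐ y ∂ν, ∫ x, pXY (x, y) ∂μ = pY y)
    (hpGmarg : ∀ᵐ v ∂ρ, ∫ y, pGY (v, y) ∂ν = pG v)
    -- the integrals defining the `f`-mutual informations are well defined
    (hintXY : Integrable (fun z : X × Y =>
      pX z.1 * pY z.2 * f (pXY z / (pX z.1 * pY z.2))) (μ.prod ν))
    (hintGY : Integrable (fun w : (Fin d → ℝ) × Y =>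
      pG w.1 * pY w.2 * f (pGY w / (pG w.1 * pY w.2))) (ρ.prod ν)) :
    (∫ z : X × Y, pX z.1 * pY z.2 * f (pXY z / (pX z.1 * pY z.2)) ∂(μ.prod ν)
        = ∫ w : (Fin d → ℝ) × Y,
            pG w.1 * pY w.2 * f (pGY w / (pG w.1 * pY w.2)) ∂(ρ.prod ν))
      ↔ (∀ᵐ z ∂(μ.prod ν), pXY z * pG (g z.1) = pGY (g z.1, z.2) * pX z.1) :=
  f_mutual_information_equality_iff_cond_indep_general d μ ν ρ f hconv g hg pXY pGY pX pY pG
    hpXYmeas hpGYmeas hpXmeas hpYmeas hpGmeas hpXYpos hpGYpos hpXpos hpYpos hpGpos hp1 hmap hpXmarg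
    hpGmarg hintXY hintGY
end

section
/- Excess risk decomposition into conditional mutual information plus regularizer: for any measurable R, L(R;λ) − L(R₀;λ) = I_KL(Y;X | R(X)) + λ D_KL(P_R || Uniform[0,1]^{d₀}), where R₀ is the uniformized sufficient representation. -/
open MeasureTheory

/-- Excess risk decomposition.
For any measurable `R`, `L(R;λ) − L(R₀;λ) = I_KL(Y;X | R(X)) + λ D_KL(P_R ‖ Uniform[0,1]^{d₀})`,
where `R₀` is the uniformized sufficient representation,
`L(R;λ) = −I_KL(Y;R(X)) + λ D_KL(P_R ‖ Uniform)`, and all information quantities are written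
via densities: `(X,Y)` has joint density `pXY` w.r.t. `μ ⊗ ν`, `(Y,R(X))` has density `pYR`
w.r.t. `ν ⊗ ρ`, `R(X)` has density `pR` w.r.t. the uniform reference measure `ρ` on the cube,
and similarly for `R₀`.  Sufficiency of `R₀` is `I_KL(Y;R₀(X)) = I_KL(Y;X)` and uniformity is
`pR₀ = 1` a.e.  The conditional mutual information is
`I_KL(Y;X|R(X)) = ∫ pXY log( (pXY ⬝ pR∘R) / (pX ⬝ pYR(·, R ·)) )`. -/
theorem msrl_excess_risk_decomposition
    {𝒳 𝒴 : Type*} [MeasurableSpace 𝒳] [MeasurableSpace 𝒴] (d₀ : ℕ)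
    (μ : Measure 𝒳) (ν : Measure 𝒴) (ρ : Measure (Fin d₀ → ℝ))
    [SigmaFinite μ] [SigmaFinite ν] [IsProbabilityMeasure ρ]
    (lam : ℝ) (hlam : 0 ≤ lam)
    (R R₀ : 𝒳 → (Fin d₀ → ℝ)) (hR : Measurable R) (hR₀ : Measurable R₀)
    (pXY : 𝒳 × 𝒴 → ℝ) (pX : 𝒳 → ℝ) (pY : 𝒴 → ℝ)
    (pYR pYR₀ : 𝒴 × (Fin d₀ → ℝ) → ℝ) (pR pR₀ : (Fin d₀ → ℝ) → ℝ)
    (hpXYmeas : Measurable pXY) (hpXmeas : Measurable pX) (hpYmeas : Measurable pY)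
    (hpYRmeas : Measurable pYR) (hpYR₀meas : Measurable pYR₀)
    (hpRmeas : Measurable pR) (hpR₀meas : Measurable pR₀)
    (hpXYpos : ∀ z, 0 < pXY z) (hpXpos : ∀ x, 0 < pX x) (hpYpos : ∀ y, 0 < pY y)
    (hpYRpos : ∀ w, 0 < pYR w) (hpYR₀pos : ∀ w, 0 < pYR₀ w)
    (hpRpos : ∀ r, 0 < pR r) (hpR₀pos : ∀ r, 0 < pR₀ r)
    -- `pXY` is a probability density with marginals `pX`, `pY`
    (hp1 : ∫ z, pXY z ∂(μ.prod ν) = 1)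
    (hpXmarg : ∀ᵐ x ∂μ, ∫ y, pXY (x, y) ∂ν = pX x)
    (hpYmarg : ∀ᵐ y ∂ν, ∫ x, pXY (x, y) ∂μ = pY y)
    -- `pYR`, `pR` are the densities of `(Y, R(X))` and `R(X)` (similarly for `R₀`)
    (hmapR : Measure.map (fun z : 𝒳 × 𝒴 => (z.2, R z.1))
        ((μ.prod ν).withDensity fun z => ENNReal.ofReal (pXY z))
      = (ν.prod ρ).withDensity fun w => ENNReal.ofReal (pYR w))
    (hmapRm : Measure.map R (μ.withDensity fun x => ENNReal.ofReal (pX x))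
      = ρ.withDensity fun r => ENNReal.ofReal (pR r))
    (hmapR₀ : Measure.map (fun z : 𝒳 × 𝒴 => (z.2, R₀ z.1))
        ((μ.prod ν).withDensity fun z => ENNReal.ofReal (pXY z))
      = (ν.prod ρ).withDensity fun w => ENNReal.ofReal (pYR₀ w))
    (hmapR₀m : Measure.map R₀ (μ.withDensity fun x => ENNReal.ofReal (pX x))
      = ρ.withDensity fun r => ENNReal.ofReal (pR₀ r))
    -- `R₀` is a uniformized sufficient representation
    (hSuff : ∫ w, pYR₀ w * Real.log (pYR₀ w / (pY w.1 * pR₀ w.2)) ∂(ν.prod ρ)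
      = ∫ z : 𝒳 × 𝒴, pXY z * Real.log (pXY z / (pX z.1 * pY z.2)) ∂(μ.prod ν))
    (hUnif₀ : ∀ᵐ r ∂ρ, pR₀ r = 1)
    -- all information integrals are well defined
    (hIXY : Integrable (fun z : 𝒳 × 𝒴 =>
      pXY z * Real.log (pXY z / (pX z.1 * pY z.2))) (μ.prod ν))
    (hIYR : Integrable (fun w : 𝒴 × (Fin d₀ → ℝ) =>
      pYR w * Real.log (pYR w / (pY w.1 * pR w.2))) (ν.prod ρ))
    (hIYR₀ : Integrable (fun w : 𝒴 × (Fin d₀ → ℝ) =>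
      pYR₀ w * Real.log (pYR₀ w / (pY w.1 * pR₀ w.2))) (ν.prod ρ))
    (hDR : Integrable (fun r => pR r * Real.log (pR r)) ρ)
    (hDR₀ : Integrable (fun r => pR₀ r * Real.log (pR₀ r)) ρ)
    (hIcond : Integrable (fun z : 𝒳 × 𝒴 =>
      pXY z * Real.log ((pXY z * pR (R z.1)) / (pX z.1 * pYR (z.2, R z.1)))) (μ.prod ν)) :
    (-(∫ w, pYR w * Real.log (pYR w / (pY w.1 * pR w.2)) ∂(ν.prod ρ))
        + lam * ∫ r, pR r * Real.log (pR r) ∂ρ)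
      - (-(∫ w, pYR₀ w * Real.log (pYR₀ w / (pY w.1 * pR₀ w.2)) ∂(ν.prod ρ))
        + lam * ∫ r, pR₀ r * Real.log (pR₀ r) ∂ρ)
      = (∫ z : 𝒳 × 𝒴,
            pXY z * Real.log ((pXY z * pR (R z.1)) / (pX z.1 * pYR (z.2, R z.1))) ∂(μ.prod ν))
        + lam * ∫ r, pR r * Real.log (pR r) ∂ρ := by
  classical
  -- abbreviations
  have hTmeas : Measurable (fun z : 𝒳 × 𝒴 => (z.2, R z.1)) :=
    measurable_snd.prodMk (hR.comp measurable_fst)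
  have hgmeas : Measurable (fun w : 𝒴 × (Fin d₀ → ℝ) => Real.log (pYR w / (pY w.1 * pR w.2))) :=
    (hpYRmeas.div ((hpYmeas.comp measurable_fst).mul (hpRmeas.comp measurable_snd))).log
  -- rewrite the ofReal densities as ℝ≥0 densities
  have hden1 : (fun w : 𝒴 × (Fin d₀ → ℝ) => ENNReal.ofReal (pYR w))
      = fun w => ((fun w => (pYR w).toNNReal) w : ENNReal) := rfl
  have hden2 : (fun z : 𝒳 × 𝒴 => ENNReal.ofReal (pXY z))
      = fun z => ((fun z => (pXY z).toNNReal) z : ENNReal) := rfl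
  -- Step A: change of variables for I(Y;R(X))
  have hA : ∫ w, pYR w * Real.log (pYR w / (pY w.1 * pR w.2)) ∂(ν.prod ρ)
      = ∫ z : 𝒳 × 𝒴,
          pXY z * Real.log (pYR (z.2, R z.1) / (pY z.2 * pR (R z.1))) ∂(μ.prod ν) := by
    have h1 : ∫ w, pYR w * Real.log (pYR w / (pY w.1 * pR w.2)) ∂(ν.prod ρ)
        = ∫ w, Real.log (pYR w / (pY w.1 * pR w.2))
            ∂((ν.prod ρ).withDensity fun w => ENNReal.ofReal (pYR w)) := by
      rw [hden1, integral_withDensity_eq_integral_smul (by measurability) _]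
      refine integral_congr_ae (Filter.Eventually.of_forall fun w => ?_)
      simp [NNReal.smul_def, Real.coe_toNNReal _ (hpYRpos w).le]
    have h2 : ∫ w, Real.log (pYR w / (pY w.1 * pR w.2))
            ∂((ν.prod ρ).withDensity fun w => ENNReal.ofReal (pYR w))
        = ∫ z : 𝒳 × 𝒴, Real.log (pYR (z.2, R z.1) / (pY z.2 * pR (R z.1)))
            ∂((μ.prod ν).withDensity fun z => ENNReal.ofReal (pXY z)) := by
      rw [← hmapR, integral_map hTmeas.aemeasurable]
      exact hgmeas.aestronglyMeasurable
    have h3 : ∫ z : 𝒳 × 𝒴, Real.log (pYR (z.2, R z.1) / (pY z.2 * pR (R z.1)))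
            ∂((μ.prod ν).withDensity fun z => ENNReal.ofReal (pXY z))
        = ∫ z : 𝒳 × 𝒴,
            pXY z * Real.log (pYR (z.2, R z.1) / (pY z.2 * pR (R z.1))) ∂(μ.prod ν) := by
      rw [hden2, integral_withDensity_eq_integral_smul (by measurability) _]
      refine integral_congr_ae (Filter.Eventually.of_forall fun z => ?_)
      simp [NNReal.smul_def, Real.coe_toNNReal _ (hpXYpos z).le]
    rw [h1, h2, h3]
  -- pointwise logarithm identity
  have hpt : ∀ z : 𝒳 × 𝒴,
      pXY z * Real.log (pYR (z.2, R z.1) / (pY z.2 * pR (R z.1)))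
        = pXY z * Real.log (pXY z / (pX z.1 * pY z.2))
          - pXY z * Real.log ((pXY z * pR (R z.1)) / (pX z.1 * pYR (z.2, R z.1))) := by
    intro z
    have ha := hpXYpos z; have hb := hpXpos z.1; have hc := hpYpos z.2
    have hd := hpYRpos (z.2, R z.1); have he := hpRpos (R z.1)
    rw [Real.log_div hd.ne' (mul_pos hc he).ne', Real.log_mul hc.ne' he.ne',
      Real.log_div ha.ne' (mul_pos hb hc).ne', Real.log_mul hb.ne' hc.ne',
      Real.log_div (mul_pos ha he).ne' (mul_pos hb hd).ne',
      Real.log_mul ha.ne' he.ne', Real.log_mul hb.ne' hd.ne']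
    ring
  have hA' : ∫ w, pYR w * Real.log (pYR w / (pY w.1 * pR w.2)) ∂(ν.prod ρ)
      = (∫ z : 𝒳 × 𝒴, pXY z * Real.log (pXY z / (pX z.1 * pY z.2)) ∂(μ.prod ν))
        - ∫ z : 𝒳 × 𝒴,
            pXY z * Real.log ((pXY z * pR (R z.1)) / (pX z.1 * pYR (z.2, R z.1)))
            ∂(μ.prod ν) := by
    rw [hA, integral_congr_ae (Filter.Eventually.of_forall hpt), integral_sub hIXY hIcond]
  -- the regularizer of R₀ vanishes
  have hD0 : ∫ r, pR₀ r * Real.log (pR₀ r) ∂ρ = 0 := by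
    have : (fun r => pR₀ r * Real.log (pR₀ r)) =ᵐ[ρ] fun _ => (0 : ℝ) :=
      hUnif₀.mono fun r h => by simp [h]
    rw [integral_congr_ae this, integral_zero]
  rw [hA', hSuff, hD0]
  ring
end

section
/- Degenerate U-process symmetrization: for a class H of symmetric bounded measurable functions on Z² and i.i.d. Z₁,…,Zₙ with independent copy Z′₁,…,Z′ₙ and independent Rademacher sequence ε, E sup_{h∈H} (1/(n(n−1))) Σ_{i≠j} [h(Z_i,Z_j) − h̃(Z_i) − h̃(Z_j) + E h(Z_i,Z_j)] ≤ E E_ε sup_{h∈H} (1/(n(n−1))) Σ_{i≠j} ε_i ε_j [h(Z_i,Z_j) − h(Z′_i,Z_j) − h(Z_i,Z′_j) + h(Z′_i,Z′_j)], where h̃(z) = E h(z, Z). -/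
/-!
Conditionally on `Z`, the decoupled kernel `h(Zᵢ,Zⱼ) − h(Z′ᵢ,Zⱼ) − h(Zᵢ,Z′ⱼ) + h(Z′ᵢ,Z′ⱼ)` has
expectation `h(Zᵢ,Zⱼ) − h̃(Zᵢ) − h̃(Zⱼ) + E h` (this uses the symmetry of `h`), so the supremum of
the degenerate U-process is a supremum of conditional expectations and Jensen's inequality bounds
its mean by the mean supremum of the decoupled process. The decoupled kernel changes sign when
`Zᵢ` and `Z′ᵢ` are exchanged, so multiplying it by `εᵢ εⱼ` amounts to exchanging `Zᵢ ↔ Z′ᵢ` for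
every `i` with `εᵢ = −1`; that exchange preserves the law of `(Z, Z′)`, hence the Rademacher
process has the same mean supremum as the decoupled one.
-/

open MeasureTheory
open scoped ENNReal

/-- The Rademacher distribution on `ℝ`: `±1` with probability `1/2` each. -/
noncomputable def radem : Measure ℝ :=
  (1 / 2 : ℝ≥0∞) • Measure.dirac (1 : ℝ) + (1 / 2 : ℝ≥0∞) • Measure.dirac (-1 : ℝ)

open ProbabilityTheory

namespace UProcess

instance : IsProbabilityMeasure radem :=
  ⟨by simp [radem, ENNReal.inv_two_add_inv_two]⟩

lemma ae_radem_eq_one_or_neg_one : ∀ᵐ t ∂radem, t = 1 ∨ t = -1 := by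
  rw [radem, ae_add_measure_iff]
  exact ⟨Measure.ae_smul_measure (by simp) _, Measure.ae_smul_measure (by simp) _⟩

lemma ae_pi_radem_eq_one_or_neg_one (n : ℕ) :
    ∀ᵐ e ∂(Measure.pi fun _ : Fin n => radem), ∀ i, e i = 1 ∨ e i = -1 :=
  ae_all_iff.mpr fun i =>
    (measurePreserving_eval (fun _ => radem) i).quasiMeasurePreserving.ae
      ae_radem_eq_one_or_neg_one

lemma measurePreserving_eval_pair {ι : Type*} [Fintype ι] {X : ι → Type*}
    [∀ i, MeasurableSpace (X i)] (μ : ∀ i, Measure (X i)) [∀ i, IsProbabilityMeasure (μ i)]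
    {i j : ι} (hij : i ≠ j) :
    MeasurePreserving (fun x => (x i, x j)) (Measure.pi μ) ((μ i).prod (μ j)) := by
  refine ⟨by fun_prop, ?_⟩
  have hind : IndepFun (fun x : ∀ k, X k => x i) (fun x => x j) (Measure.pi μ) :=
    (iIndepFun_pi (X := fun k (y : X k) => y) fun _ => aemeasurable_id).indepFun hij
  rw [(indepFun_iff_map_prod_eq_prod_map_map (measurable_pi_apply i).aemeasurable
    (measurable_pi_apply j).aemeasurable).mp hind,
    (measurePreserving_eval μ i).map_eq, (measurePreserving_eval μ j).map_eq]

section TripleProduct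

variable {α β γ : Type*} [MeasurableSpace α] [MeasurableSpace β] [MeasurableSpace γ]
  {μ : Measure α} {ν : Measure β} {ρ : Measure γ} [SFinite μ] [SFinite ν] [SFinite ρ]
  {f : α × β × γ → ℝ}

lemma ae_integrable_of_integrable_prod_prod (hf : Integrable f (μ.prod (ν.prod ρ))) :
    ∀ᵐ c ∂ρ, Integrable (fun q : α × β => f (q.1, q.2, c)) (μ.prod ν) :=
  ((measurePreserving_prodAssoc μ ν ρ).integrable_comp_emb
    MeasurableEquiv.prodAssoc.measurableEmbedding |>.mpr hf).prod_left_ae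

lemma integral_prod_prod_eq_integral_integral (hf : Integrable f (μ.prod (ν.prod ρ))) :
    ∫ ω, f ω ∂(μ.prod (ν.prod ρ)) = ∫ c, ∫ q : α × β, f (q.1, q.2, c) ∂(μ.prod ν) ∂ρ := by
  have hassoc := measurePreserving_prodAssoc μ ν ρ
  rw [← hassoc.integral_comp' f]
  exact integral_prod_symm _
    (hassoc.integrable_comp_emb MeasurableEquiv.prodAssoc.measurableEmbedding |>.mpr hf)

end TripleProduct

section Swap

variable {ι α : Type*} [MeasurableSpace α]

def piSwap (s : Set ι) [DecidablePred (· ∈ s)] :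
    (ι → α) × (ι → α) ≃ᵐ (ι → α) × (ι → α) :=
  (MeasurableEquiv.arrowProdEquivProdArrow α α ι).symm.trans
    ((MeasurableEquiv.piCongrRight fun i =>
      if i ∈ s then MeasurableEquiv.refl (α × α) else MeasurableEquiv.prodComm).trans
      (MeasurableEquiv.arrowProdEquivProdArrow α α ι))

@[simp] lemma piSwap_apply_fst (s : Set ι) [DecidablePred (· ∈ s)] (q : (ι → α) × (ι → α)) :
    (piSwap s q).1 = s.piecewise q.1 q.2 := by
  funext i
  by_cases hi : i ∈ s <;> simp [piSwap, hi, MeasurableEquiv.arrowProdEquivProdArrow,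
    Equiv.arrowProdEquivProdArrow, MeasurableEquiv.piCongrRight]
  rfl

@[simp] lemma piSwap_apply_snd (s : Set ι) [DecidablePred (· ∈ s)] (q : (ι → α) × (ι → α)) :
    (piSwap s q).2 = s.piecewise q.2 q.1 := by
  funext i
  by_cases hi : i ∈ s <;> simp [piSwap, hi, MeasurableEquiv.arrowProdEquivProdArrow,
    Equiv.arrowProdEquivProdArrow, MeasurableEquiv.piCongrRight]
  rfl

lemma measurePreserving_piSwap [Fintype ι] (μ : ι → Measure α) [∀ i, SigmaFinite (μ i)]
    (s : Set ι) [DecidablePred (· ∈ s)] :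
    MeasurePreserving (piSwap s) ((Measure.pi μ).prod (Measure.pi μ))
      ((Measure.pi μ).prod (Measure.pi μ)) := by
  have hΦ := measurePreserving_arrowProdEquivProdArrow α α ι μ μ
  refine hΦ.comp ((measurePreserving_pi _ _ fun i => ?_).comp hΦ.symm)
  by_cases hi : i ∈ s
  · simpa [hi] using MeasurePreserving.id ((μ i).prod (μ i))
  · simp only [hi, if_false]
    exact Measure.measurePreserving_swap

end Swap

section Kernel

variable {𝒵 : Type*}

def rectDiff (h : 𝒵 → 𝒵 → ℝ) (z z' w w' : 𝒵) : ℝ := h z w - h z' w - h z w' + h z' w'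

lemma abs_rectDiff_le {h : 𝒵 → 𝒵 → ℝ} {b : ℝ} (hb : ∀ z w, |h z w| ≤ b) (z z' w w' : 𝒵) :
    |rectDiff h z z' w w'| ≤ 4 * b := by
  unfold rectDiff
  have := hb z w; have := hb z' w; have := hb z w'; have := hb z' w'
  rw [abs_le] at *
  constructor <;> linarith

lemma sign_mul_sign_mul_rectDiff {ε δ : ℝ} (hε : ε = 1 ∨ ε = -1) (hδ : δ = 1 ∨ δ = -1)
    (h : 𝒵 → 𝒵 → ℝ) (z z' w w' : 𝒵) :
    ε * δ * rectDiff h z z' w w' =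
      rectDiff h (if ε = 1 then z else z') (if ε = 1 then z' else z)
        (if δ = 1 then w else w') (if δ = 1 then w' else w) := by
  rcases hε with rfl | rfl <;> rcases hδ with rfl | rfl <;>
    norm_num [rectDiff] <;> ring

end Kernel

section DegeneratePart

variable {𝒵 : Type*} [MeasurableSpace 𝒵] (Pz : Measure 𝒵) [IsProbabilityMeasure Pz]

noncomputable def degeneratePart (h : 𝒵 → 𝒵 → ℝ) (z w : 𝒵) : ℝ :=
  h z w - (∫ u, h z u ∂Pz) - (∫ u, h w u ∂Pz) + ∫ z, ∫ w, h z w ∂Pz ∂Pz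

variable {ι : Type*} [Fintype ι] {h : 𝒵 → 𝒵 → ℝ} {b : ℝ}

lemma integrable_rectDiff (hm : Measurable (Function.uncurry h)) (hb : ∀ z w, |h z w| ≤ b)
    (x : ι → 𝒵) (i j : ι) :
    Integrable (fun y => rectDiff h (x i) (y i) (x j) (y j)) (Measure.pi fun _ : ι => Pz) := by
  have hm' {f g : (ι → 𝒵) → 𝒵} (hf : Measurable f) (hg : Measurable g) :
      Measurable fun y => h (f y) (g y) := hm.comp (hf.prodMk hg)
  refine .of_bound ?_ (4 * b) (.of_forall fun y => abs_rectDiff_le hb _ _ _ _)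
  refine Measurable.aestronglyMeasurable ?_
  unfold rectDiff
  refine (((hm' ?_ ?_).sub (hm' ?_ ?_)).sub (hm' ?_ ?_)).add (hm' ?_ ?_) <;> fun_prop

/-- Symmetry of `h` is what identifies `E h(Z'ᵢ, zⱼ)` with `h̃(zⱼ) = E h(zⱼ, Z)`. -/
lemma integral_rectDiff_eq_degeneratePart (hm : Measurable (Function.uncurry h))
    (hs : ∀ z w, h z w = h w z) (hb : ∀ z w, |h z w| ≤ b) (x : ι → 𝒵) {i j : ι} (hij : i ≠ j) :
    ∫ y, rectDiff h (x i) (y i) (x j) (y j) ∂(Measure.pi fun _ : ι => Pz) =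
      degeneratePart Pz h (x i) (x j) := by
  have hbdd : Integrable (Function.uncurry h) (Pz.prod Pz) :=
    .of_bound hm.aestronglyMeasurable b (.of_forall fun q => hb q.1 q.2)
  have hint {f g : (ι → 𝒵) → 𝒵} (hf : Measurable f) (hg : Measurable g) :
      Integrable (fun y => h (f y) (g y)) (Measure.pi fun _ : ι => Pz) :=
    .of_bound (hm.comp (hf.prodMk hg)).aestronglyMeasurable b (.of_forall fun y => hb _ _)
  have h₁ : ∫ y, h (y i) (x j) ∂(Measure.pi fun _ : ι => Pz) = ∫ u, h (x j) u ∂Pz := by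
    rw [integral_comp_eval (μ := fun _ : ι => Pz) (i := i) (f := fun z => h z (x j))
      (hm.comp (measurable_id.prodMk measurable_const)).aestronglyMeasurable]
    simp_rw [hs _ (x j)]
  have h₂ : ∫ y, h (x i) (y j) ∂(Measure.pi fun _ : ι => Pz) = ∫ u, h (x i) u ∂Pz :=
    integral_comp_eval (μ := fun _ : ι => Pz) (i := j) (f := fun w => h (x i) w)
      (hm.comp (measurable_const.prodMk measurable_id)).aestronglyMeasurable
  have h₃ : ∫ y, h (y i) (y j) ∂(Measure.pi fun _ : ι => Pz) = ∫ z, ∫ w, h z w ∂Pz ∂Pz := by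
    have hpair := measurePreserving_eval_pair (fun _ : ι => Pz) hij
    calc ∫ y, h (y i) (y j) ∂(Measure.pi fun _ : ι => Pz)
        = ∫ q, Function.uncurry h q ∂(Pz.prod Pz) := by
          rw [← hpair.map_eq,
            integral_map hpair.aemeasurable (hpair.map_eq ▸ hm.aestronglyMeasurable)]
          rfl
      _ = _ := integral_prod _ hbdd
  have I₀ : Integrable (fun _ : ι → 𝒵 => h (x i) (x j)) (Measure.pi fun _ : ι => Pz) :=
    integrable_const _
  have I₁ := hint (f := fun y => y i) (g := fun _ => x j) (by fun_prop) (by fun_prop)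
  have I₂ := hint (f := fun _ => x i) (g := fun y => y j) (by fun_prop) (by fun_prop)
  have I₃ := hint (f := fun y => y i) (g := fun y => y j) (by fun_prop) (by fun_prop)
  unfold rectDiff
  rw [integral_add ((I₀.sub' I₁).sub' I₂) I₃, integral_sub (I₀.sub' I₁) I₂, integral_sub I₀ I₁,
    integral_const, h₁, h₂, h₃, probReal_univ, one_smul, degeneratePart]
  ring

end DegeneratePart

section OffDiag

variable {n : ℕ}

noncomputable def offDiagAvg (n : ℕ) (k : Fin n → Fin n → ℝ) : ℝ :=
  ((n : ℝ) * ((n : ℝ) - 1))⁻¹ * ∑ p ∈ Finset.univ.offDiag, k p.1 p.2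

lemma offDiagAvg_congr {k k' : Fin n → Fin n → ℝ} (h : ∀ i j, i ≠ j → k i j = k' i j) :
    offDiagAvg n k = offDiagAvg n k' := by
  unfold offDiagAvg
  congr 1
  exact Finset.sum_congr rfl fun p hp => h _ _ (Finset.mem_offDiag.mp hp).2.2

lemma abs_offDiagAvg_le {k : Fin n → Fin n → ℝ} {B : ℝ} (hk : ∀ i j, |k i j| ≤ B) :
    |offDiagAvg n k| ≤
      |((n : ℝ) * ((n : ℝ) - 1))⁻¹| * ((Finset.univ (α := Fin n)).offDiag.card * B) := by
  rw [offDiagAvg, abs_mul]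
  gcongr
  refine (Finset.abs_sum_le_sum_abs _ _).trans ?_
  simpa using Finset.sum_le_sum fun p (_ : p ∈ Finset.univ.offDiag) => hk p.1 p.2

variable {α : Type*} [MeasurableSpace α] {μ : Measure α} {k : α → Fin n → Fin n → ℝ}

lemma integrable_offDiagAvg (hk : ∀ i j, Integrable (fun a => k a i j) μ) :
    Integrable (fun a => offDiagAvg n (k a)) μ :=
  (integrable_finsetSum _ fun p _ => hk p.1 p.2).const_mul _

lemma integral_offDiagAvg (hk : ∀ i j, Integrable (fun a => k a i j) μ) :
    ∫ a, offDiagAvg n (k a) ∂μ = offDiagAvg n fun i j => ∫ a, k a i j ∂μ := by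
  simp only [offDiagAvg]
  rw [integral_const_mul, integral_finsetSum _ fun p _ => hk p.1 p.2]

end OffDiag

section ClassSup

variable {ι : Type*} {H : Set ι}

noncomputable def classSup (H : Set ι) (F : ι → ℝ) : ℝ := sSup {v | ∃ h ∈ H, v = F h}

lemma le_classSup {F : ι → ℝ} {C : ℝ} (hC : ∀ h ∈ H, F h ≤ C) {h : ι} (hh : h ∈ H) :
    F h ≤ classSup H F :=
  le_csSup ⟨C, by rintro _ ⟨h, hh, rfl⟩; exact hC h hh⟩ ⟨h, hh, rfl⟩

lemma classSup_le (hH : H.Nonempty) {F : ι → ℝ} {C : ℝ} (hC : ∀ h ∈ H, F h ≤ C) :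
    classSup H F ≤ C := by
  obtain ⟨h₀, hh₀⟩ := hH
  exact csSup_le ⟨F h₀, h₀, hh₀, rfl⟩ (by rintro _ ⟨h, hh, rfl⟩; exact hC h hh)

lemma classSup_congr {F G : ι → ℝ} (hFG : ∀ h ∈ H, F h = G h) :
    classSup H F = classSup H G := by
  unfold classSup
  congr 1
  ext v
  exact exists_congr fun h => and_congr_right fun hh => by rw [hFG h hh]

lemma classSup_integral_le_integral_classSup {α : Type*} [MeasurableSpace α] {μ : Measure α}
    (hH : H.Nonempty) {F : ι → α → ℝ} (hF : ∀ h ∈ H, Integrable (F h) μ)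
    (hbdd : ∀ a, ∃ C, ∀ h ∈ H, F h a ≤ C) (hsup : Integrable (fun a => classSup H (F · a)) μ) :
    classSup H (fun h => ∫ a, F h a ∂μ) ≤ ∫ a, classSup H (F · a) ∂μ :=
  classSup_le hH fun h hh => integral_mono (hF h hh) hsup fun a =>
    (hbdd a).elim fun _ hC => le_classSup (F := (F · a)) hC hh

end ClassSup

section Symmetrization

variable {𝒵 : Type*} [MeasurableSpace 𝒵] {n : ℕ}

noncomputable def degenerateSup (Pz : Measure 𝒵) (H : Set (𝒵 → 𝒵 → ℝ)) (x : Fin n → 𝒵) : ℝ :=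
  classSup H fun h => offDiagAvg n fun i j => degeneratePart Pz h (x i) (x j)

noncomputable def decoupledSup (H : Set (𝒵 → 𝒵 → ℝ)) (q : (Fin n → 𝒵) × (Fin n → 𝒵)) : ℝ :=
  classSup H fun h => offDiagAvg n fun i j => rectDiff h (q.1 i) (q.2 i) (q.1 j) (q.2 j)

noncomputable def rademacherSup (H : Set (𝒵 → 𝒵 → ℝ)) (q : (Fin n → 𝒵) × (Fin n → 𝒵))
    (e : Fin n → ℝ) : ℝ :=
  classSup H fun h => offDiagAvg n fun i j =>
    e i * e j * rectDiff h (q.1 i) (q.2 i) (q.1 j) (q.2 j)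

variable {H : Set (𝒵 → 𝒵 → ℝ)} {b : ℝ}

lemma rademacherSup_eq_decoupledSup_piSwap {e : Fin n → ℝ} (he : ∀ i, e i = 1 ∨ e i = -1)
    (q : (Fin n → 𝒵) × (Fin n → 𝒵)) :
    rademacherSup H q e = decoupledSup H (piSwap {i | e i = 1} q) := by
  have key (h : 𝒵 → 𝒵 → ℝ) (i j : Fin n) :
      e i * e j * rectDiff h (q.1 i) (q.2 i) (q.1 j) (q.2 j) =
        rectDiff h ((piSwap {i | e i = 1} q).1 i) ((piSwap {i | e i = 1} q).2 i)
          ((piSwap {i | e i = 1} q).1 j) ((piSwap {i | e i = 1} q).2 j) := by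
    rw [sign_mul_sign_mul_rectDiff (he i) (he j)]
    simp [Set.piecewise]
  simp only [rademacherSup, decoupledSup, key]

variable (Pz : Measure 𝒵) [IsProbabilityMeasure Pz]

lemma degenerateSup_le_integral_decoupledSup (hH : H.Nonempty)
    (hmeas : ∀ h ∈ H, Measurable (Function.uncurry h)) (hsymm : ∀ h ∈ H, ∀ z w, h z w = h w z)
    (hbound : ∀ h ∈ H, ∀ z w, |h z w| ≤ b) {x : Fin n → 𝒵}
    (hx : Integrable (fun y => decoupledSup H (x, y)) (Measure.pi fun _ : Fin n => Pz)) :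
    degenerateSup Pz H x ≤ ∫ y, decoupledSup H (x, y) ∂(Measure.pi fun _ : Fin n => Pz) := by
  have hint (h) (hh : h ∈ H) (i j : Fin n) :=
    integrable_rectDiff Pz (hmeas h hh) (hbound h hh) x i j
  have hterm : ∀ h ∈ H, (offDiagAvg n fun i j => degeneratePart Pz h (x i) (x j)) =
      ∫ y, offDiagAvg n (fun i j => rectDiff h (x i) (y i) (x j) (y j))
        ∂(Measure.pi fun _ : Fin n => Pz) := fun h hh => by
    rw [integral_offDiagAvg (hint h hh)]
    exact offDiagAvg_congr fun i j hij =>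
      (integral_rectDiff_eq_degeneratePart Pz (hmeas h hh) (hsymm h hh) (hbound h hh) x hij).symm
  rw [degenerateSup, classSup_congr hterm]
  exact classSup_integral_le_integral_classSup hH (fun h hh => integrable_offDiagAvg (hint h hh))
    (fun y => ⟨_, fun h hh => (le_abs_self _).trans
      (abs_offDiagAvg_le fun i j => abs_rectDiff_le (hbound h hh) _ _ _ _)⟩) hx

lemma integral_degenerateSup_le_integral_decoupledSup (hH : H.Nonempty)
    (hmeas : ∀ h ∈ H, Measurable (Function.uncurry h)) (hsymm : ∀ h ∈ H, ∀ z w, h z w = h w z)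
    (hbound : ∀ h ∈ H, ∀ z w, |h z w| ≤ b)
    (hF : Integrable (degenerateSup Pz H) (Measure.pi fun _ : Fin n => Pz))
    (hM : Integrable (decoupledSup H)
      ((Measure.pi fun _ : Fin n => Pz).prod (Measure.pi fun _ : Fin n => Pz))) :
    ∫ x, degenerateSup Pz H x ∂(Measure.pi fun _ : Fin n => Pz) ≤
      ∫ q, decoupledSup H q
        ∂((Measure.pi fun _ : Fin n => Pz).prod (Measure.pi fun _ : Fin n => Pz)) :=
  calc ∫ x, degenerateSup Pz H x ∂(Measure.pi fun _ : Fin n => Pz)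
      ≤ ∫ x, ∫ y, decoupledSup H (x, y) ∂(Measure.pi fun _ : Fin n => Pz)
          ∂(Measure.pi fun _ : Fin n => Pz) := by
        refine integral_mono_ae hF hM.integral_prod_left ?_
        filter_upwards [hM.prod_right_ae] with x hx
        exact degenerateSup_le_integral_decoupledSup Pz hH hmeas hsymm hbound hx
    _ = _ := integral_integral hM

variable {ρ : Measure (Fin n → ℝ)} [IsProbabilityMeasure ρ]

lemma integrable_decoupledSup (hρ : ∀ᵐ e ∂ρ, ∀ i, e i = 1 ∨ e i = -1)
    (hR : Integrable (fun ω : (Fin n → 𝒵) × (Fin n → 𝒵) × (Fin n → ℝ) =>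
      rademacherSup H (ω.1, ω.2.1) ω.2.2)
      ((Measure.pi fun _ : Fin n => Pz).prod ((Measure.pi fun _ : Fin n => Pz).prod ρ))) :
    Integrable (decoupledSup H)
      ((Measure.pi fun _ : Fin n => Pz).prod (Measure.pi fun _ : Fin n => Pz)) := by
  obtain ⟨e, he, heint⟩ := (hρ.and (ae_integrable_of_integrable_prod_prod hR)).exists
  have hswap := measurePreserving_piSwap (fun _ : Fin n => Pz) {i | e i = 1}
  refine (hswap.integrable_comp_emb (piSwap _).measurableEmbedding).mp ?_
  simpa [Function.comp_def, rademacherSup_eq_decoupledSup_piSwap he] using heint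

lemma integral_rademacherSup (hρ : ∀ᵐ e ∂ρ, ∀ i, e i = 1 ∨ e i = -1)
    (hR : Integrable (fun ω : (Fin n → 𝒵) × (Fin n → 𝒵) × (Fin n → ℝ) =>
      rademacherSup H (ω.1, ω.2.1) ω.2.2)
      ((Measure.pi fun _ : Fin n => Pz).prod ((Measure.pi fun _ : Fin n => Pz).prod ρ))) :
    ∫ ω, rademacherSup H (ω.1, ω.2.1) ω.2.2
        ∂((Measure.pi fun _ : Fin n => Pz).prod ((Measure.pi fun _ : Fin n => Pz).prod ρ)) =
      ∫ q, decoupledSup H q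
        ∂((Measure.pi fun _ : Fin n => Pz).prod (Measure.pi fun _ : Fin n => Pz)) := by
  rw [integral_prod_prod_eq_integral_integral hR]
  calc _ = ∫ _ : Fin n → ℝ, ∫ q, decoupledSup H q
          ∂((Measure.pi fun _ : Fin n => Pz).prod (Measure.pi fun _ : Fin n => Pz)) ∂ρ := by
        refine integral_congr_ae (hρ.mono fun e he => ?_)
        simp only [Prod.mk.eta, rademacherSup_eq_decoupledSup_piSwap he]
        exact (measurePreserving_piSwap (fun _ => Pz) _).integral_comp' (decoupledSup H)
    _ = _ := by simp

end Symmetrization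

end UProcess

open UProcess

theorem degenerate_uprocess_symmetrization_general
    {𝒵 : Type*} [MeasurableSpace 𝒵] (Pz : Measure 𝒵) [IsProbabilityMeasure Pz]
    (n : ℕ) (b : ℝ)
    (H : Set (𝒵 → 𝒵 → ℝ)) (hHne : H.Nonempty)
    (hmeas : ∀ h ∈ H, Measurable (Function.uncurry h))
    (hsymm : ∀ h ∈ H, ∀ z w, h z w = h w z)
    (hbound : ∀ h ∈ H, ∀ z w, |h z w| ≤ b)
    -- both suprema are integrable on the canonical product space
    (hintL : Integrable (fun ω : (Fin n → 𝒵) × ((Fin n → 𝒵) × (Fin n → ℝ)) =>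
        sSup {v : ℝ | ∃ h ∈ H, v = ((n : ℝ) * ((n : ℝ) - 1))⁻¹ *
          ∑ p ∈ Finset.univ.offDiag,
            (h (ω.1 p.1) (ω.1 p.2) - (∫ w, h (ω.1 p.1) w ∂Pz) - (∫ w, h (ω.1 p.2) w ∂Pz)
              + ∫ z, ∫ w, h z w ∂Pz ∂Pz)})
      ((Measure.pi fun _ : Fin n => Pz).prod
        ((Measure.pi fun _ : Fin n => Pz).prod (Measure.pi fun _ : Fin n => radem))))
    (hintR : Integrable (fun ω : (Fin n → 𝒵) × ((Fin n → 𝒵) × (Fin n → ℝ)) =>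
        sSup {v : ℝ | ∃ h ∈ H, v = ((n : ℝ) * ((n : ℝ) - 1))⁻¹ *
          ∑ p ∈ Finset.univ.offDiag, ω.2.2 p.1 * ω.2.2 p.2 *
            (h (ω.1 p.1) (ω.1 p.2) - h (ω.2.1 p.1) (ω.1 p.2) - h (ω.1 p.1) (ω.2.1 p.2)
              + h (ω.2.1 p.1) (ω.2.1 p.2))})
      ((Measure.pi fun _ : Fin n => Pz).prod
        ((Measure.pi fun _ : Fin n => Pz).prod (Measure.pi fun _ : Fin n => radem)))) :
    (∫ ω : (Fin n → 𝒵) × ((Fin n → 𝒵) × (Fin n → ℝ)),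
        sSup {v : ℝ | ∃ h ∈ H, v = ((n : ℝ) * ((n : ℝ) - 1))⁻¹ *
          ∑ p ∈ Finset.univ.offDiag,
            (h (ω.1 p.1) (ω.1 p.2) - (∫ w, h (ω.1 p.1) w ∂Pz) - (∫ w, h (ω.1 p.2) w ∂Pz)
              + ∫ z, ∫ w, h z w ∂Pz ∂Pz)}
      ∂((Measure.pi fun _ : Fin n => Pz).prod
        ((Measure.pi fun _ : Fin n => Pz).prod (Measure.pi fun _ : Fin n => radem))))
    ≤ ∫ ω : (Fin n → 𝒵) × ((Fin n → 𝒵) × (Fin n → ℝ)),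
        sSup {v : ℝ | ∃ h ∈ H, v = ((n : ℝ) * ((n : ℝ) - 1))⁻¹ *
          ∑ p ∈ Finset.univ.offDiag, ω.2.2 p.1 * ω.2.2 p.2 *
            (h (ω.1 p.1) (ω.1 p.2) - h (ω.2.1 p.1) (ω.1 p.2) - h (ω.1 p.1) (ω.2.1 p.2)
              + h (ω.2.1 p.1) (ω.2.1 p.2))}
      ∂((Measure.pi fun _ : Fin n => Pz).prod
        ((Measure.pi fun _ : Fin n => Pz).prod (Measure.pi fun _ : Fin n => radem))) := by
  have hρ := ae_pi_radem_eq_one_or_neg_one n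
  have hF : Integrable (degenerateSup Pz H) (Measure.pi fun _ : Fin n => Pz) :=
    hintL.of_comp_fst (IsProbabilityMeasure.ne_zero _)
  have hM := integrable_decoupledSup Pz hρ hintR
  calc _ = ∫ x, degenerateSup Pz H x ∂(Measure.pi fun _ : Fin n => Pz) :=
        (integral_fun_fst (degenerateSup Pz H)).trans (by simp)
    _ ≤ _ := integral_degenerateSup_le_integral_decoupledSup Pz hHne hmeas hsymm hbound hF hM
    _ = _ := (integral_rademacherSup Pz hρ hintR).symm

/-- Degenerate U-process symmetrization.
For a class `H` of symmetric bounded measurable functions on `𝒵²`, i.i.d. `Z₁,…,Zₙ ∼ Pz` with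
an independent copy `Z′₁,…,Z′ₙ` and an independent Rademacher sequence `ε` (realized on the
canonical product space),
`E sup_{h∈H} (n(n−1))⁻¹ Σ_{i≠j} [h(Zᵢ,Zⱼ) − h̃(Zᵢ) − h̃(Zⱼ) + E h]`
`≤ E sup_{h∈H} (n(n−1))⁻¹ Σ_{i≠j} εᵢ εⱼ [h(Zᵢ,Zⱼ) − h(Z′ᵢ,Zⱼ) − h(Zᵢ,Z′ⱼ) + h(Z′ᵢ,Z′ⱼ)]`,
where `h̃(z) = E h(z, Z)`. -/
theorem degenerate_uprocess_symmetrization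
    {𝒵 : Type*} [MeasurableSpace 𝒵] (Pz : Measure 𝒵) [IsProbabilityMeasure Pz]
    (n : ℕ) (hn : 2 ≤ n) (b : ℝ)
    (H : Set (𝒵 → 𝒵 → ℝ)) (hHne : H.Nonempty)
    (hmeas : ∀ h ∈ H, Measurable (Function.uncurry h))
    (hsymm : ∀ h ∈ H, ∀ z w, h z w = h w z)
    (hbound : ∀ h ∈ H, ∀ z w, |h z w| ≤ b)
    -- both suprema are integrable on the canonical product space
    (hintL : Integrable (fun ω : (Fin n → 𝒵) × ((Fin n → 𝒵) × (Fin n → ℝ)) =>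
        sSup {v : ℝ | ∃ h ∈ H, v = ((n : ℝ) * ((n : ℝ) - 1))⁻¹ *
          ∑ p ∈ Finset.univ.offDiag,
            (h (ω.1 p.1) (ω.1 p.2) - (∫ w, h (ω.1 p.1) w ∂Pz) - (∫ w, h (ω.1 p.2) w ∂Pz)
              + ∫ z, ∫ w, h z w ∂Pz ∂Pz)})
      ((Measure.pi fun _ : Fin n => Pz).prod
        ((Measure.pi fun _ : Fin n => Pz).prod (Measure.pi fun _ : Fin n => radem))))
    (hintR : Integrable (fun ω : (Fin n → 𝒵) × ((Fin n → 𝒵) × (Fin n → ℝ)) =>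
        sSup {v : ℝ | ∃ h ∈ H, v = ((n : ℝ) * ((n : ℝ) - 1))⁻¹ *
          ∑ p ∈ Finset.univ.offDiag, ω.2.2 p.1 * ω.2.2 p.2 *
            (h (ω.1 p.1) (ω.1 p.2) - h (ω.2.1 p.1) (ω.1 p.2) - h (ω.1 p.1) (ω.2.1 p.2)
              + h (ω.2.1 p.1) (ω.2.1 p.2))})
      ((Measure.pi fun _ : Fin n => Pz).prod
        ((Measure.pi fun _ : Fin n => Pz).prod (Measure.pi fun _ : Fin n => radem)))) :
    (∫ ω : (Fin n → 𝒵) × ((Fin n → 𝒵) × (Fin n → ℝ)),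
        sSup {v : ℝ | ∃ h ∈ H, v = ((n : ℝ) * ((n : ℝ) - 1))⁻¹ *
          ∑ p ∈ Finset.univ.offDiag,
            (h (ω.1 p.1) (ω.1 p.2) - (∫ w, h (ω.1 p.1) w ∂Pz) - (∫ w, h (ω.1 p.2) w ∂Pz)
              + ∫ z, ∫ w, h z w ∂Pz ∂Pz)}
      ∂((Measure.pi fun _ : Fin n => Pz).prod
        ((Measure.pi fun _ : Fin n => Pz).prod (Measure.pi fun _ : Fin n => radem))))
    ≤ ∫ ω : (Fin n → 𝒵) × ((Fin n → 𝒵) × (Fin n → ℝ)),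
        sSup {v : ℝ | ∃ h ∈ H, v = ((n : ℝ) * ((n : ℝ) - 1))⁻¹ *
          ∑ p ∈ Finset.univ.offDiag, ω.2.2 p.1 * ω.2.2 p.2 *
            (h (ω.1 p.1) (ω.1 p.2) - h (ω.2.1 p.1) (ω.1 p.2) - h (ω.1 p.1) (ω.2.1 p.2)
              + h (ω.2.1 p.1) (ω.2.1 p.2))}
      ∂((Measure.pi fun _ : Fin n => Pz).prod
        ((Measure.pi fun _ : Fin n => Pz).prod (Measure.pi fun _ : Fin n => radem))) :=
  degenerate_uprocess_symmetrization_general Pz n b H hHne hmeas hsymm hbound hintL hintR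
end
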